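/- Let F, G be unit-norm frames of ℝ² with three vectors each. Then F and G are equivalent if and only if FP_p(F) = FP_p(G) for p = 1, 2, 3, where FP_p(H) = ∑_{i<j} |⟨h_i,h_j⟩|^p. -/

import Mathlib

/-!
The potentials `FP_1, FP_2, FP_3` of a triple are the first three power sums of the three numbers
`|⟪f j, f k⟫|`, so they determine this multiset; indexing each pair by the vector it omits, every
permutation of the pairs comes from a permutation of the vectors.

For the rigidity, identify `ℝ²` with `ℂ`, so that unit vectors are points of the circle group.
Since `⟪u, v⟫ = Re (v / u)`, knowing `|⟪u, v⟫|` determines `(v / u)²` up to inversion. In the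
abelian group of squared ratios, agreeing pairwise up to inversion forces agreement up to one
common inversion; taking square roots costs a sign per vector, and what remains is a rotation,
possibly composed with complex conjugation.
-/

open scoped RealInnerProductSpace

/-- Two frames are equivalent when one is obtained from the other by a
composition of a common orthogonal transformation of `ℝ²`, a permutation of the
indices, and sign changes of individual vectors. -/
def FrameEquiv {k : ℕ} (f g : Fin k → EuclideanSpace ℝ (Fin 2)) : Prop :=
  ∃ (U : EuclideanSpace ℝ (Fin 2) ≃ₗᵢ[ℝ] EuclideanSpace ℝ (Fin 2))
    (σ : Equiv.Perm (Fin k)) (ε : Fin k → ℝ),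
      (∀ i, ε i = 1 ∨ ε i = -1) ∧ ∀ i, g i = ε i • U (f (σ i))

/-- The `p`-frame potential `FP_p(f) = ∑_{i<j} |⟨f i, f j⟩|^p`. -/
noncomputable def framePotential {k : ℕ} (p : ℕ)
    (f : Fin k → EuclideanSpace ℝ (Fin 2)) : ℝ :=
  ∑ q ∈ Finset.filter (fun q : Fin k × Fin k => q.1 < q.2) Finset.univ,
    |⟪f q.1, f q.2⟫| ^ p

section PowerSums

open Finset Polynomial

theorem exists_perm_of_map_univ_val_eq {ι β : Type*} [Fintype ι] [DecidableEq β] {a b : ι → β}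
    (h : univ.val.map a = univ.val.map b) : ∃ σ : Equiv.Perm ι, ∀ i, b i = a (σ i) := by
  have hfiber : ∀ v, Fintype.card {i // a i = v} = Fintype.card {i // b i = v} := fun v => by
    have := congrArg (Multiset.count v) h
    simp only [Multiset.count_map] at this
    simpa [Fintype.card_subtype, Finset.card_def, eq_comm] using this
  let e : ι ≃ ι := Equiv.ofFiberEquiv fun v => Fintype.equivOfCardEq (hfiber v)
  exact ⟨e.symm, fun i => (congrArg b (e.apply_symm_apply i)).symm.trans
    (Equiv.ofFiberEquiv_map _ (e.symm i))⟩

theorem map_univ_val_eq_of_sum_pow_eq {K : Type*} [Field K] [CharZero K] {a b : Fin 3 → K}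
    (h : ∀ p ∈ ({1, 2, 3} : Finset ℕ), ∑ i, a i ^ p = ∑ i, b i ^ p) :
    univ.val.map a = univ.val.map b := by
  have h1 := h 1 (by simp)
  have h2 := h 2 (by simp)
  have h3 := h 3 (by simp)
  simp only [Fin.sum_univ_three, pow_one] at h1 h2 h3
  -- Newton's identities for the second and third elementary symmetric functions
  have e2 : a 0 * a 1 + a 0 * a 2 + a 1 * a 2 = b 0 * b 1 + b 0 * b 2 + b 1 * b 2 := by
    linear_combination ((a 0 + a 1 + a 2 + b 0 + b 1 + b 2) / 2) * h1 - h2 / 2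
  have e3 : a 0 * a 1 * a 2 = b 0 * b 1 * b 2 := by
    linear_combination (((a 0 + a 1 + a 2) ^ 2 + (a 0 + a 1 + a 2) * (b 0 + b 1 + b 2)
      + (b 0 + b 1 + b 2) ^ 2) / 6 - (b 0 ^ 2 + b 1 ^ 2 + b 2 ^ 2) / 2) * h1
      - ((a 0 + a 1 + a 2) / 2) * h2 + h3 / 3
  have hprod : ∀ c : Fin 3 → K, ((univ.val.map c).map (X - C ·)).prod =
      X ^ 3 - C (c 0 + c 1 + c 2) * X ^ 2 + C (c 0 * c 1 + c 0 * c 2 + c 1 * c 2) * X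
        - C (c 0 * c 1 * c 2) := fun c => by
    simp only [Fin.univ_val_map, Multiset.map_coe, Multiset.prod_coe, List.map_ofFn,
      List.prod_ofFn, Fin.prod_univ_three, Function.comp_apply, map_add, map_mul]
    ring
  rw [← roots_multiset_prod_X_sub_C (univ.val.map a),
    ← roots_multiset_prod_X_sub_C (univ.val.map b), hprod, hprod, h1, e2, e3]

end PowerSums

theorem forall_eq_or_forall_eq_inv_of_div_eq {G : Type*} [CommGroup G] {x y : Fin 3 → G}
    (hx : x 0 = 1) (hy : y 0 = 1)
    (h : ∀ i j, y j / y i = x j / x i ∨ y j / y i = (x j / x i)⁻¹) :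
    (∀ i, y i = x i) ∨ (∀ i, y i = (x i)⁻¹) := by
  have h01 := h 0 1
  have h02 := h 0 2
  have h12 := h 1 2
  simp only [hx, hy, div_one] at h01 h02
  -- in the mixed cases the third pair forces `x 1` or `x 2` to be an involution
  have key : (y 1 = x 1 ∧ y 2 = x 2) ∨ (y 1 = (x 1)⁻¹ ∧ y 2 = (x 2)⁻¹) := by
    rcases h01 with h01 | h01 <;> rcases h02 with h02 | h02 <;> rw [h01, h02] at h12
    · exact Or.inl ⟨h01, h02⟩
    · rcases h12 with h12 | h12
      · exact Or.inl ⟨h01, h02.trans (div_left_inj.mp h12)⟩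
      · rw [inv_div, div_eq_mul_inv, div_eq_inv_mul] at h12
        exact Or.inr ⟨h01.trans (mul_left_cancel h12).symm, h02⟩
    · rcases h12 with h12 | h12
      · exact Or.inl ⟨h01.trans (div_right_inj.mp h12), h02⟩
      · rw [inv_div, div_inv_eq_mul, div_eq_mul_inv, mul_comm] at h12
        exact Or.inr ⟨h01, h02.trans (mul_left_cancel h12)⟩
    · exact Or.inr ⟨h01, h02⟩
  have hcases : ∀ i : Fin 3, i = 0 ∨ i = 1 ∨ i = 2 := by decide
  rcases key with ⟨h1, h2⟩ | ⟨h1, h2⟩ <;> [left; right] <;> intro i <;>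
    rcases hcases i with rfl | rfl | rfl <;> simp [hx, hy, h1, h2]

namespace Circle

theorem eq_or_eq_inv_of_re_eq {u v : Circle} (h : (u : ℂ).re = (v : ℂ).re) :
    u = v ∨ u = v⁻¹ := by
  have hu := normSq_coe u
  have hv := normSq_coe v
  rw [Complex.normSq_apply] at hu hv
  rcases sq_eq_sq_iff_eq_or_eq_neg.mp
    (by linear_combination hu - hv - ((u : ℂ).re + (v : ℂ).re) * h :
      (u : ℂ).im ^ 2 = (v : ℂ).im ^ 2) with him | him
  · exact Or.inl (ext (Complex.ext h him))
  · refine Or.inr (ext ?_)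
    rw [coe_inv_eq_conj]
    exact Complex.ext (by simpa using h) (by simpa using him)

theorem sq_eq_or_sq_eq_inv_of_abs_re_eq {u v : Circle} (h : |(u : ℂ).re| = |(v : ℂ).re|) :
    u ^ 2 = v ^ 2 ∨ u ^ 2 = (v ^ 2)⁻¹ := by
  have hu := normSq_coe u
  have hv := normSq_coe v
  rw [Complex.normSq_apply] at hu hv
  have hre : (u : ℂ).re ^ 2 = (v : ℂ).re ^ 2 := by rw [← sq_abs, h, sq_abs]
  refine eq_or_eq_inv_of_re_eq ?_
  simp only [sq, coe_mul, Complex.mul_re]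
  linear_combination 2 * hre - hu + hv

theorem eq_or_eq_neg_of_sq_eq {u v : Circle} (h : u ^ 2 = v ^ 2) : u = v ∨ u = -v := by
  rcases sq_eq_sq_iff_eq_or_eq_neg.mp (congrArg ((↑) : Circle → ℂ) h) with h | h
  · exact Or.inl (ext h)
  · exact Or.inr (ext h)

theorem inner_coe (u v : Circle) : ⟪(u : ℂ), v⟫ = ((v / u : Circle) : ℂ).re := by
  rw [Complex.inner, coe_div, div_eq_mul_inv, ← coe_inv, coe_inv_eq_conj]

theorem exists_sign_of_sq_div_eq {ι : Type*} (w v : ι → Circle) (c : Circle)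
    (h : ∀ i, (w i / c) ^ 2 = v i ^ 2) :
    ∃ ε : ι → ℝ, (∀ i, ε i = 1 ∨ ε i = -1) ∧ ∀ i, (w i : ℂ) = ε i • ((c * v i : Circle) : ℂ) := by
  have hsign : ∀ i, ∃ s : ℝ, (s = 1 ∨ s = -1) ∧ (w i : ℂ) = s • ((c * v i : Circle) : ℂ) := by
    intro i
    rcases eq_or_eq_neg_of_sq_eq (h i) with hi | hi <;> rw [div_eq_iff_eq_mul'] at hi
    · exact ⟨1, Or.inl rfl, by rw [hi, one_smul]⟩
    · exact ⟨-1, Or.inr rfl, by rw [hi, mul_neg, coe_neg, neg_one_smul]⟩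
  choose ε hε hw using hsign
  exact ⟨ε, hε, hw⟩

theorem exists_linearIsometryEquiv_of_abs_inner_eq (z w : Fin 3 → Circle)
    (h : ∀ i j, |⟪(z i : ℂ), z j⟫| = |⟪(w i : ℂ), w j⟫|) :
    ∃ (U : ℂ ≃ₗᵢ[ℝ] ℂ) (ε : Fin 3 → ℝ), (∀ i, ε i = 1 ∨ ε i = -1) ∧
      ∀ i, (w i : ℂ) = ε i • U (z i) := by
  have hratio : ∀ (u : Fin 3 → Circle) i j,
      ((u j / u 0) ^ 2) / ((u i / u 0) ^ 2) = (u j / u i) ^ 2 :=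
    fun u i j => by rw [← div_pow, div_div_div_cancel_right]
  have hsq : ∀ i j, (w j / w i) ^ 2 = (z j / z i) ^ 2 ∨ (w j / w i) ^ 2 = ((z j / z i) ^ 2)⁻¹ :=
    fun i j => sq_eq_or_sq_eq_inv_of_abs_re_eq (by simpa only [inner_coe] using (h i j).symm)
  rcases forall_eq_or_forall_eq_inv_of_div_eq (x := fun i => (z i / z 0) ^ 2)
      (y := fun i => (w i / w 0) ^ 2) (by simp) (by simp)
      (fun i j => by simpa only [hratio] using hsq i j) with hrot | hrefl
  · obtain ⟨ε, hε, hw⟩ := exists_sign_of_sq_div_eq w (fun i => z i / z 0) (w 0) hrot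
    refine ⟨rotation (w 0 / z 0), ε, hε, fun i => ?_⟩
    rw [hw i, rotation_apply, ← coe_mul, mul_div_assoc', div_mul_eq_mul_div]
  · obtain ⟨ε, hε, hw⟩ := exists_sign_of_sq_div_eq w (fun i => z 0 / z i) (w 0)
      (fun i => by rw [hrefl i, ← inv_pow, inv_div])
    refine ⟨Complex.conjLIE.trans (rotation (w 0 * z 0)), ε, hε, fun i => ?_⟩
    rw [hw i, LinearIsometryEquiv.trans_apply, rotation_apply, Complex.conjLIE_apply,
      ← coe_inv_eq_conj, ← coe_mul, mul_assoc, div_eq_mul_inv]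

end Circle

section InnerProductSpace

variable {V : Type*} [NormedAddCommGroup V] [InnerProductSpace ℝ V]

theorem exists_linearIsometryEquiv_of_abs_inner_eq (φ : V ≃ₗᵢ[ℝ] ℂ) {f g : Fin 3 → V}
    (hf : ∀ i, ‖f i‖ = 1) (hg : ∀ i, ‖g i‖ = 1) (h : ∀ i j, |⟪f i, f j⟫| = |⟪g i, g j⟫|) :
    ∃ (U : V ≃ₗᵢ[ℝ] V) (ε : Fin 3 → ℝ), (∀ i, ε i = 1 ∨ ε i = -1) ∧
      ∀ i, g i = ε i • U (f i) := by
  let toCircle (v : Fin 3 → V) (hv : ∀ i, ‖v i‖ = 1) (i : Fin 3) : Circle :=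
    ⟨φ (v i), mem_sphere_zero_iff_norm.2 (by rw [LinearIsometryEquiv.norm_map, hv])⟩
  obtain ⟨U, ε, hε, hU⟩ := Circle.exists_linearIsometryEquiv_of_abs_inner_eq
    (toCircle f hf) (toCircle g hg) (fun i j => by simpa [toCircle] using h i j)
  refine ⟨φ.trans (U.trans φ.symm), ε, hε, fun i => ?_⟩
  rw [← φ.symm_apply_apply (g i)]
  exact (congrArg φ.symm (hU i)).trans (φ.symm.map_smul _ _)

/-- The pair `{i + 1, i + 2}` is the pair of indices in `Fin 3` that omits `i`. -/
def absInnerOpposite (f : Fin 3 → V) (i : Fin 3) : ℝ := |⟪f (i + 1), f (i + 2)⟫|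

theorem absInnerOpposite_comp_perm (f : Fin 3 → V) (σ : Equiv.Perm (Fin 3)) (i : Fin 3) :
    absInnerOpposite (f ∘ σ) i = absInnerOpposite f (σ i) := by
  have hσ : ∀ (σ : Equiv.Perm (Fin 3)) i, (σ (i + 1) = σ i + 1 ∧ σ (i + 2) = σ i + 2) ∨
      (σ (i + 1) = σ i + 2 ∧ σ (i + 2) = σ i + 1) := by decide
  rcases hσ σ i with ⟨h1, h2⟩ | ⟨h1, h2⟩ <;>
    simp only [absInnerOpposite, Function.comp_apply, h1, h2, real_inner_comm]

theorem absInnerOpposite_smul_map (f : Fin 3 → V) (U : V →ₗᵢ[ℝ] V) {ε : Fin 3 → ℝ}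
    (hε : ∀ i, |ε i| = 1) : absInnerOpposite (fun i => ε i • U (f i)) = absInnerOpposite f := by
  ext i
  simp only [absInnerOpposite, real_inner_smul_left, real_inner_smul_right,
    LinearIsometry.inner_map_map, abs_mul, hε, one_mul]

theorem forall_abs_inner_eq_of_absInnerOpposite_eq {f g : Fin 3 → V} (hf : ∀ i, ‖f i‖ = 1)
    (hg : ∀ i, ‖g i‖ = 1) (h : absInnerOpposite f = absInnerOpposite g) :
    ∀ i j, |⟪f i, f j⟫| = |⟪g i, g j⟫| := by
  have hpairs : ∀ i j : Fin 3,
      i = j ∨ ∃ k, (i = k + 1 ∧ j = k + 2) ∨ (i = k + 2 ∧ j = k + 1) := by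
    decide
  intro i j
  rcases hpairs i j with rfl | ⟨k, ⟨rfl, rfl⟩ | ⟨rfl, rfl⟩⟩
  · simp [hf, hg]
  · exact congrFun h k
  · rw [real_inner_comm (f _), real_inner_comm (g _)]
    exact congrFun h k

end InnerProductSpace

theorem framePotential_eq_sum_absInnerOpposite (p : ℕ)
    (f : Fin 3 → EuclideanSpace ℝ (Fin 2)) :
    framePotential p f = ∑ i, absInnerOpposite f i ^ p := by
  have hpairs : Finset.filter (fun q : Fin 3 × Fin 3 => q.1 < q.2) Finset.univ =
      {(0, 1), (0, 2), (1, 2)} := by decide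
  rw [framePotential, hpairs, Finset.sum_insert (by decide), Finset.sum_insert (by decide),
    Finset.sum_singleton, Fin.sum_univ_three]
  change _ = |⟪f 1, f 2⟫| ^ p + |⟪f 2, f 0⟫| ^ p + |⟪f 0, f 1⟫| ^ p
  rw [real_inner_comm (f 0) (f 2)]
  ring

theorem frameEquiv_iff_framePotential_123_general (f g : Fin 3 → EuclideanSpace ℝ (Fin 2))
    (hf1 : ∀ i, ‖f i‖ = 1) (hg1 : ∀ i, ‖g i‖ = 1) :
    FrameEquiv f g ↔
      ∀ p ∈ ({1, 2, 3} : Finset ℕ), framePotential p f = framePotential p g := by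
  simp only [framePotential_eq_sum_absInnerOpposite]
  constructor
  · rintro ⟨U, σ, ε, hε, hg⟩ p -
    have habs : ∀ i, |ε i| = 1 := fun i => by rcases hε i with h | h <;> simp [h]
    have hopp : absInnerOpposite g = absInnerOpposite (f ∘ σ) := by
      rw [funext hg]
      exact absInnerOpposite_smul_map (f ∘ σ) U.toLinearIsometry habs
    simp only [hopp, absInnerOpposite_comp_perm]
    exact (Equiv.sum_comp σ (fun i => absInnerOpposite f i ^ p)).symm
  · intro h
    obtain ⟨σ, hσ⟩ := exists_perm_of_map_univ_val_eq (map_univ_val_eq_of_sum_pow_eq h)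
    have hopp : absInnerOpposite (f ∘ σ) = absInnerOpposite g :=
      funext fun i => by rw [absInnerOpposite_comp_perm, hσ]
    obtain ⟨U, ε, hε, hU⟩ := exists_linearIsometryEquiv_of_abs_inner_eq
      Complex.orthonormalBasisOneI.repr.symm (fun i => hf1 (σ i)) hg1
      (forall_abs_inner_eq_of_absInnerOpposite_eq (fun i => hf1 (σ i)) hg1 hopp)
    exact ⟨U, σ, ε, hε, hU⟩

/-- Two unit-norm frames of `ℝ²` with three vectors each are equivalent if and
only if their `p`-frame potentials agree for `p = 1, 2, 3`. -/
theorem frameEquiv_iff_framePotential_123 (f g : Fin 3 → EuclideanSpace ℝ (Fin 2))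
    (hf1 : ∀ i, ‖f i‖ = 1) (hg1 : ∀ i, ‖g i‖ = 1)
    (hfspan : Submodule.span ℝ (Set.range f) = ⊤)
    (hgspan : Submodule.span ℝ (Set.range g) = ⊤) :
    FrameEquiv f g ↔
      ∀ p ∈ ({1, 2, 3} : Finset ℕ), framePotential p f = framePotential p g :=
  frameEquiv_iff_framePotential_123_general f g hf1 hg1
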